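/- Under the Newton tracking primal–dual iteration, with Q := εI − α(I − 𝐖), for every t ≥ 0 the iterates satisfy the inequality (x* − x^t)ᵀQ(x* − x^t) − (x* − x^{t+1})ᵀQ(x* − x^{t+1}) + (1/α)(‖v* − v^t‖² − ‖v* − v^{t+1}‖²) ≥ (x^t − x^{t+1})ᵀQ(x^t − x^{t+1}) + (1/α)‖v^{t+1} − v^t‖² + μ_f‖x* − x^{t+1}‖² + 2⟨x* − x^{t+1}, ∇f(x^{t+1}) − ∇f(x^t) + ∇²f(x^t)(x^t − x^{t+1})⟩. -/

import Mathlib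

/-!
Write `e = x* − x^{t+1}`, `d = x^t − x^{t+1}` and `S = (I − 𝐖)^{1/2}`. Testing the primal step
against `e`, and the dual step `v^{t+1} − v^t = α S x^{t+1} = −α S e` against `v* − v^{t+1}`
(moving the symmetric `S` across, with `S v* = −∇f(x*)` and `S² = I − 𝐖`), shows that the left
side minus `dᵀQd + ‖v^{t+1} − v^t‖²/α` is exactly
`2⟪e, ∇f(x*) − ∇f(x^t) + ∇²f(x^t) d⟫`. The Hessian lower bound makes `∇f` `μ_f`-strongly
monotone (integrate along segments), so `2⟪e, ∇f(x*) − ∇f(x^{t+1})⟫ ≥ 2μ_f‖e‖² ≥ μ_f‖e‖²`.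
-/

open Matrix Kronecker
open scoped InnerProductSpace

noncomputable section

/-- Local decision space `ℝ^p`. -/
abbrev Ep (p : ℕ) : Type := EuclideanSpace ℝ (Fin p)

/-- Stacked space `ℝ^{np}`. -/
abbrev Vnp (n p : ℕ) : Type := EuclideanSpace ℝ (Fin n × Fin p)

/-- The `i`-th block `x_i ∈ ℝ^p` of a stacked vector `x ∈ ℝ^{np}`. -/
def blk {n p : ℕ} (x : Vnp n p) (i : Fin n) : Ep p := WithLp.toLp 2 (fun j => x (i, j))

/-- Aggregate objective `f(x) = ∑ i, f_i(x_i)`. -/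
def aggF {n p : ℕ} (f : Fin n → Ep p → ℝ) (x : Vnp n p) : ℝ := ∑ i, f i (blk x i)

/-- Stacked gradient `∇f(x) = [∇f_1(x_1); …; ∇f_n(x_n)]`. -/
def aggGrad {n p : ℕ} (g : Fin n → Ep p → Ep p) (x : Vnp n p) : Vnp n p :=
  WithLp.toLp 2 (fun ij : Fin n × Fin p => g ij.1 (blk x ij.1) ij.2)

/-- Block-diagonal Hessian `∇²f(x)` applied to `w`. -/
def aggHess {n p : ℕ} (h : Fin n → Ep p → (Ep p →L[ℝ] Ep p)) (x w : Vnp n p) : Vnp n p :=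
  WithLp.toLp 2 (fun ij : Fin n × Fin p => h ij.1 (blk x ij.1) (blk w ij.1) ij.2)

/-- `𝐖 = W ⊗ I_p`. -/
def bigW {n : ℕ} (p : ℕ) (W : Matrix (Fin n) (Fin n) ℝ) :
    Matrix (Fin n × Fin p) (Fin n × Fin p) ℝ :=
  W ⊗ₖ (1 : Matrix (Fin p) (Fin p) ℝ)

/-- `I − 𝐖`. -/
def IWmat {n : ℕ} (p : ℕ) (W : Matrix (Fin n) (Fin n) ℝ) :
    Matrix (Fin n × Fin p) (Fin n × Fin p) ℝ :=
  1 - bigW p W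

/-- The square root of a positive semidefinite matrix, as `Matrix.PosSemidef.sqrt` was defined
in older Mathlib (removed since). -/
def Matrix.PosSemidef.sqrt {m : Type*} [Fintype m] [DecidableEq m]
    {A : Matrix m m ℝ} (hA : A.PosSemidef) : Matrix m m ℝ :=
  (hA.1.eigenvectorUnitary : Matrix m m ℝ) * diagonal ((↑) ∘ Real.sqrt ∘ hA.1.eigenvalues) *
    (star (hA.1.eigenvectorUnitary : Matrix m m ℝ))

lemma Matrix.PosSemidef.sqrt_isHermitian {m : Type*} [Fintype m] [DecidableEq m]
    {A : Matrix m m ℝ} (hA : A.PosSemidef) : hA.sqrt.IsHermitian := by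
  unfold Matrix.PosSemidef.sqrt
  simp [IsHermitian, star_eq_conjTranspose, Matrix.mul_assoc]

lemma Matrix.PosSemidef.sqrt_mul_self {m : Type*} [Fintype m] [DecidableEq m]
    {A : Matrix m m ℝ} (hA : A.PosSemidef) : hA.sqrt * hA.sqrt = A := by
  set U : Matrix m m ℝ := (hA.1.eigenvectorUnitary : Matrix m m ℝ)
  have hU : star U * U = 1 := Unitary.star_mul_self_of_mem hA.1.eigenvectorUnitary.2
  conv_rhs => rw [hA.1.spectral_theorem, Unitary.conjStarAlgAut_apply]
  simp only [Matrix.PosSemidef.sqrt, Matrix.mul_assoc]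
  rw [← Matrix.mul_assoc (star U) U, hU, Matrix.one_mul, ← Matrix.mul_assoc (diagonal _),
    diagonal_mul_diagonal]
  congr 3
  ext i
  simp [Real.mul_self_sqrt (hA.eigenvalues_nonneg i)]

lemma Matrix.toEuclideanLin_mul_apply {𝕜 l m n : Type*} [RCLike 𝕜] [Fintype m] [Fintype n]
    [DecidableEq m] [DecidableEq n]
    (A : Matrix l m 𝕜) (B : Matrix m n 𝕜) (u : EuclideanSpace 𝕜 n) :
    toEuclideanLin (A * B) u = toEuclideanLin A (toEuclideanLin B u) := by
  simp

section InnerProductSpace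

variable {E : Type*} [NormedAddCommGroup E] [InnerProductSpace ℝ E]

theorem mul_norm_sub_sq_le_inner_sub_of_hasFDerivAt {g : E → E} {g' : E → E →L[ℝ] E} {μ : ℝ}
    (hg : ∀ z, HasFDerivAt g (g' z) z) (hcoer : ∀ z w, μ * ‖w‖ ^ 2 ≤ ⟪g' z w, w⟫_ℝ) (a b : E) :
    μ * ‖a - b‖ ^ 2 ≤ ⟪a - b, g a - g b⟫_ℝ := by
  set u := a - b
  let F : ℝ → ℝ := fun s => ⟪g (b + s • u), u⟫_ℝ - s * (μ * ‖u‖ ^ 2)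
  have hF : ∀ s, HasDerivAt F (⟪g' (b + s • u) u, u⟫_ℝ - μ * ‖u‖ ^ 2) s := by
    intro s
    have hline : HasDerivAt (fun s : ℝ => b + s • u) u s := by
      simpa using ((hasDerivAt_id s).smul_const u).const_add b
    have hgu := ((hg _).comp_hasDerivAt s hline).inner ℝ (hasDerivAt_const s u)
    exact (hgu.sub ((hasDerivAt_id' s).mul_const (μ * ‖u‖ ^ 2))).congr_deriv (by simp)
  have hmono : Monotone F :=
    monotone_of_deriv_nonneg (fun s => (hF s).differentiableAt)
      (fun s => by rw [(hF s).deriv]; linarith [hcoer (b + s • u) u])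
  have h01 : F 0 ≤ F 1 := hmono zero_le_one
  have hbu : b + u = a := add_sub_cancel b a
  simp only [F, zero_smul, add_zero, zero_mul, sub_zero, one_smul, hbu, one_mul] at h01
  rw [real_inner_comm u, real_inner_comm u] at h01
  rw [inner_sub_right]
  linarith

/-- One step `(x, v) ↦ (x', v')` of the primal–dual Newton tracking iteration, in an abstract
inner product space: `S` plays `(I − 𝐖)^{1/2}`, `M = S²` plays `I − 𝐖`, `Hd` stands for
`∇²f(x)(x − x')`, and `gx`, `gs` for `∇f(x)`, `∇f(x*)`. -/
theorem newton_tracking_step_identity {S M : E →ₗ[ℝ] E} (hS : S.IsSymmetric)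
    (hM : ∀ u, S (S u) = M u) {α ε : ℝ} (hα : α ≠ 0) {x x' v v' xs vs gx gs Hd : E}
    (hprimal : Hd + ε • (x - x') = gx + S v + α • M x) (hdual : v' = v + α • S x')
    (hK1 : gs + S vs = 0) (hK2 : S xs = 0) :
    ⟪xs - x, ε • (xs - x) - α • M (xs - x)⟫_ℝ - ⟪xs - x', ε • (xs - x') - α • M (xs - x')⟫_ℝ
        + (1 / α) * (‖vs - v‖ ^ 2 - ‖vs - v'‖ ^ 2)
      = ⟪x - x', ε • (x - x') - α • M (x - x')⟫_ℝ + (1 / α) * ‖v' - v‖ ^ 2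
        + 2 * ⟪xs - x', gs - gx + Hd⟫_ℝ := by
  set e := xs - x'
  set d := x - x'
  have hM_symm : M.IsSymmetric := fun u w => by rw [← hM, ← hM, hS, hS]
  have hQ : ⟪e - d, ε • (e - d) - α • M (e - d)⟫_ℝ
      = ⟪e, ε • e - α • M e⟫_ℝ + ⟪d, ε • d - α • M d⟫_ℝ
        - 2 * (ε * ⟪e, d⟫_ℝ - α * ⟪e, M d⟫_ℝ) := by
    have hde : ⟪d, M e⟫_ℝ = ⟪e, M d⟫_ℝ := by rw [← hM_symm, real_inner_comm]
    simp only [map_sub, inner_sub_left, inner_sub_right, real_inner_smul_right,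
      real_inner_comm d e, hde]
    ring
  have hv : ‖vs - v‖ ^ 2 = ‖vs - v'‖ ^ 2 + 2 * ⟪vs - v', v' - v⟫_ℝ + ‖v' - v‖ ^ 2 := by
    rw [← norm_add_sq_real, sub_add_sub_cancel]
  have hprimal_e : ε * ⟪e, d⟫_ℝ - α * ⟪e, M d⟫_ℝ
      = ⟪e, gx⟫_ℝ + ⟪e, S v⟫_ℝ + α * ⟪e, M x'⟫_ℝ - ⟪e, Hd⟫_ℝ := by
    have := congrArg (⟪e, ·⟫_ℝ) hprimal
    have hMx : M x = M d + M x' := by rw [← map_add, sub_add_cancel]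
    simp only [inner_add_right, real_inner_smul_right, hMx] at this
    linarith
  have hdual_e : ⟪vs - v', v' - v⟫_ℝ = α * (⟪e, gs⟫_ℝ + ⟪e, S v⟫_ℝ + α * ⟪e, M x'⟫_ℝ) := by
    have hSx' : S x' = -S e := by rw [map_sub, hK2, zero_sub, neg_neg]
    have hSvs : S vs = -gs := eq_neg_of_add_eq_zero_right hK1
    have hSv' : S v' = S v + α • M x' := by rw [hdual, map_add, map_smul, hM]
    have hdv : v' - v = α • S x' := by rw [hdual, add_sub_cancel_left]
    rw [hdv, real_inner_smul_right, hSx', inner_neg_right, ← hS, map_sub, hSvs, hSv']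
    simp only [real_inner_comm e, inner_sub_right, inner_add_right, inner_neg_right,
      real_inner_smul_right]
    ring
  rw [← sub_sub_sub_cancel_right xs x x', hQ, hv, hdual_e]
  simp only [inner_add_right, inner_sub_right]
  field_simp
  linear_combination (-2 * α) * hprimal_e

end InnerProductSpace

section Blocks

variable {n p : ℕ}

lemma blk_sub (u w : Vnp n p) (i : Fin n) : blk (u - w) i = blk u i - blk w i := by
  ext j; simp [blk]

lemma blk_aggGrad (g : Fin n → Ep p → Ep p) (u : Vnp n p) (i : Fin n) :
    blk (aggGrad g u) i = g i (blk u i) := by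
  ext j; simp [blk, aggGrad]

lemma inner_eq_sum_inner_blk (u w : Vnp n p) : ⟪u, w⟫_ℝ = ∑ i, ⟪blk u i, blk w i⟫_ℝ := by
  simp only [PiLp.inner_apply, RCLike.inner_apply, conj_trivial]
  exact Fintype.sum_prod_type _

lemma norm_sq_eq_sum_norm_sq_blk (u : Vnp n p) : ‖u‖ ^ 2 = ∑ i, ‖blk u i‖ ^ 2 := by
  simp only [← real_inner_self_eq_norm_sq, inner_eq_sum_inner_blk]

lemma mul_norm_sub_sq_le_inner_aggGrad_sub {g : Fin n → Ep p → Ep p} {μ : ℝ}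
    (hg : ∀ i a b, μ * ‖a - b‖ ^ 2 ≤ ⟪a - b, g i a - g i b⟫_ℝ) (a b : Vnp n p) :
    μ * ‖a - b‖ ^ 2 ≤ ⟪a - b, aggGrad g a - aggGrad g b⟫_ℝ := by
  rw [inner_eq_sum_inner_blk, norm_sq_eq_sum_norm_sq_blk, Finset.mul_sum]
  gcongr with i
  simpa only [blk_sub, blk_aggGrad] using hg i (blk a i) (blk b i)

end Blocks

theorem newton_tracking_descent_inequality_general
    {n p : ℕ}
    (W : Matrix (Fin n) (Fin n) ℝ)
    (hpsd : (IWmat p W).PosSemidef)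
    (g : Fin n → Ep p → Ep p)
    (h : Fin n → Ep p → (Ep p →L[ℝ] Ep p))
    (μf : ℝ) (hμpos : 0 < μf)
    (hh : ∀ i z, HasFDerivAt (g i) (h i z) z)
    (hlow : ∀ i z w, μf * ‖w‖ ^ 2 ≤ ⟪(h i z) w, w⟫_ℝ)
    (α ε : ℝ) (hα : 0 < α)
    (x v : ℕ → Vnp n p)
    (hprimal : ∀ t, aggHess h (x t) (x t - x (t + 1)) + ε • (x t - x (t + 1)) =
      aggGrad g (x t) + Matrix.toEuclideanLin hpsd.sqrt (v t)
        + α • Matrix.toEuclideanLin (IWmat p W) (x t))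
    (hdual : ∀ t, v (t + 1) = v t + α • Matrix.toEuclideanLin hpsd.sqrt (x (t + 1)))
    (xs vs : Vnp n p)
    (hK1 : aggGrad g xs + Matrix.toEuclideanLin hpsd.sqrt vs = 0)
    (hK2 : Matrix.toEuclideanLin hpsd.sqrt xs = 0)
    :
    ∀ t : ℕ,
      ⟪xs - x t, ε • (xs - x t) - α • Matrix.toEuclideanLin (IWmat p W) (xs - x t)⟫_ℝ
        - ⟪xs - x (t + 1),
            ε • (xs - x (t + 1))
              - α • Matrix.toEuclideanLin (IWmat p W) (xs - x (t + 1))⟫_ℝ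
        + (1 / α) * (‖vs - v t‖ ^ 2 - ‖vs - v (t + 1)‖ ^ 2)
      ≥ ⟪x t - x (t + 1),
            ε • (x t - x (t + 1))
              - α • Matrix.toEuclideanLin (IWmat p W) (x t - x (t + 1))⟫_ℝ
        + (1 / α) * ‖v (t + 1) - v t‖ ^ 2
        + μf * ‖xs - x (t + 1)‖ ^ 2
        + 2 * ⟪xs - x (t + 1),
            aggGrad g (x (t + 1)) - aggGrad g (x t)
              + aggHess h (x t) (x t - x (t + 1))⟫_ℝ := by
  intro t
  have hS : (toEuclideanLin hpsd.sqrt).IsSymmetric :=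
    isSymmetric_toEuclideanLin_iff.mpr hpsd.sqrt_isHermitian
  have hM : ∀ u, toEuclideanLin hpsd.sqrt (toEuclideanLin hpsd.sqrt u)
      = toEuclideanLin (IWmat p W) u := fun u => by
    rw [← toEuclideanLin_mul_apply, hpsd.sqrt_mul_self]
  rw [newton_tracking_step_identity hS hM hα.ne' (hprimal t) (hdual t) hK1 hK2]
  have hmono : μf * ‖xs - x (t + 1)‖ ^ 2
      ≤ ⟪xs - x (t + 1), aggGrad g xs - aggGrad g (x (t + 1))⟫_ℝ :=
    mul_norm_sub_sq_le_inner_aggGrad_sub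
      (fun i => mul_norm_sub_sq_le_inner_sub_of_hasFDerivAt (hh i) (hlow i)) _ _
  have hnonneg : 0 ≤ μf * ‖xs - x (t + 1)‖ ^ 2 := by positivity
  rw [← sub_add_sub_cancel (aggGrad g xs) (aggGrad g (x (t + 1))), add_assoc (_ - _),
    inner_add_right]
  linarith

/-- The fundamental descent inequality of the Newton tracking primal–dual iteration
(with `Q = εI − α(I−𝐖)`). -/
theorem newton_tracking_descent_inequality
    {n p : ℕ} (hn : 0 < n) (hp : 0 < p)
    (W : Matrix (Fin n) (Fin n) ℝ)
    (hWnonneg : ∀ i j, 0 ≤ W i j) (hWsymm : W.IsSymm)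
    (hWstoch : W *ᵥ (fun _ => (1 : ℝ)) = fun _ => 1)
    (hWker : ∀ y : Fin n → ℝ, (1 - W) *ᵥ y = 0 ↔ ∃ c : ℝ, y = fun _ => c)
    (hpsd : (IWmat p W).PosSemidef)
    (f : Fin n → Ep p → ℝ) (g : Fin n → Ep p → Ep p)
    (h : Fin n → Ep p → (Ep p →L[ℝ] Ep p))
    (μf Lf : ℝ) (hμpos : 0 < μf) (hμL : μf ≤ Lf)
    (hC2 : ∀ i, ContDiff ℝ 2 (f i))
    (hg : ∀ i z, HasGradientAt (f i) (g i z) z)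
    (hh : ∀ i z, HasFDerivAt (g i) (h i z) z)
    (hlow : ∀ i z w, μf * ‖w‖ ^ 2 ≤ ⟪(h i z) w, w⟫_ℝ)
    (hup : ∀ i z w, ⟪(h i z) w, w⟫_ℝ ≤ Lf * ‖w‖ ^ 2)
    (α ε : ℝ) (hα : 0 < α) (hε : 0 < ε)
    (x v : ℕ → Vnp n p)
    (hprimal : ∀ t, aggHess h (x t) (x t - x (t + 1)) + ε • (x t - x (t + 1)) =
      aggGrad g (x t) + Matrix.toEuclideanLin hpsd.sqrt (v t)
        + α • Matrix.toEuclideanLin (IWmat p W) (x t))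
    (hdual : ∀ t, v (t + 1) = v t + α • Matrix.toEuclideanLin hpsd.sqrt (x (t + 1)))
    (xs vs : Vnp n p)
    (hK1 : aggGrad g xs + Matrix.toEuclideanLin hpsd.sqrt vs = 0)
    (hK2 : Matrix.toEuclideanLin hpsd.sqrt xs = 0)
    :
    ∀ t : ℕ,
      ⟪xs - x t, ε • (xs - x t) - α • Matrix.toEuclideanLin (IWmat p W) (xs - x t)⟫_ℝ
        - ⟪xs - x (t + 1),
            ε • (xs - x (t + 1))
              - α • Matrix.toEuclideanLin (IWmat p W) (xs - x (t + 1))⟫_ℝ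
        + (1 / α) * (‖vs - v t‖ ^ 2 - ‖vs - v (t + 1)‖ ^ 2)
      ≥ ⟪x t - x (t + 1),
            ε • (x t - x (t + 1))
              - α • Matrix.toEuclideanLin (IWmat p W) (x t - x (t + 1))⟫_ℝ
        + (1 / α) * ‖v (t + 1) - v t‖ ^ 2
        + μf * ‖xs - x (t + 1)‖ ^ 2
        + 2 * ⟪xs - x (t + 1),
            aggGrad g (x (t + 1)) - aggGrad g (x t)
              + aggHess h (x t) (x t - x (t + 1))⟫_ℝ :=
  newton_tracking_descent_inequality_general W hpsd g h μf hμpos hh hlow α ε hα x v hprimal hdual xs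
    vs hK1 hK2
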